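/- Let k > ℓ ≥ 0 be integers, μ = ±1, and m₁, m₂ ∈ ℤ. If ℓ ∈ {0,1} then Σ(2^k, μ2^ℓ; m₁,m₂) = 0. Assume ℓ ≥ 2. If k − ℓ ≥ 3, then Σ(2^k, μ2^ℓ; m₁,m₂) = 2^ℓ·∑_{0 ≤ i ≤ ℓ−2, i ≡ ℓ (mod 2)} ( g₁(2^k, m₁, 2^{k−i})·g₁(2^ℓ, m₂, 2^{i+2}) + (−μ)·g₋₁(2^k, m₁, 2^{k−i})·g₋₁(2^ℓ, m₂, 2^{i+2}) ). If k − ℓ = 2, then Σ(2^k, μ2^ℓ; m₁,m₂) = (−1)^ℓ·2^ℓ·∑_{0 ≤ i ≤ ℓ−2, i ≡ ℓ (mod 2)} ( g₁(2^k, m₁, 2^{k−i})·g₁(2^ℓ, m₂, 2^{i+2}) + (−μ)·g₋₁(2^k, m₁, 2^{k−i})·g₋₁(2^ℓ, m₂, 2^{i+2}) ). If k − ℓ = 1, then Σ(2^k, μ2^ℓ; m₁,m₂) = (−μ)^ℓ·2^ℓ·∑_{0 ≤ i ≤ ℓ−2, i ≡ ℓ (mod 2)} ( g₁(2^k, m₁,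 2^{k−i})·g₋₁(2^ℓ, m₂, 2^{i+2}) + (−μ)·g₋₁(2^k, m₁, 2^{k−i})·g₁(2^ℓ, m₂, 2^{i+2}) ). -/

import Mathlib

/-- The Kronecker symbol at a prime `p`. -/
def kronPrime (a : ℤ) (p : ℕ) : ℤ :=
  if p = 2 then (if a % 2 = 0 then 0 else if a % 8 = 1 ∨ a % 8 = 7 then 1 else -1)
  else jacobiSym a p

/-- The Kronecker symbol `(a/n)`. -/
def kron (a n : ℤ) : ℤ :=
  if n = 0 then (if a = 1 ∨ a = -1 then 1 else 0)
  else (if a < 0 ∧ n < 0 then -1 else 1) *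
    n.natAbs.factorization.prod fun p e => kronPrime a p ^ e

/-- `e2pi r = exp(2πir)`. -/
noncomputable def e2pi (r : ℚ) : ℂ :=
  Complex.exp (2 * Real.pi * Complex.I * (r : ℂ))

/-- The set `S(A₁,A₂)` of normalized tuples `(B₁,C₁,B₂,C₂)` satisfying
`A₁C₂ + 4B₁B₂ + C₁A₂ = 0`, the gcd conditions, `Cᵢ ≡ -1 (mod 4)` and the
normalization inequalities. -/
def PlSet (A₁ A₂ : ℤ) : Set (ℤ × ℤ × ℤ × ℤ) :=
  {v | A₁ * v.2.2.2 + 4 * v.1 * v.2.2.1 + v.2.1 * A₂ = 0 ∧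
    Int.gcd A₁ (Int.gcd v.1 v.2.1) = 1 ∧
    Int.gcd A₂ (Int.gcd v.2.2.1 v.2.2.2) = 1 ∧
    v.2.1 ≡ -1 [ZMOD 4] ∧ v.2.2.2 ≡ -1 [ZMOD 4] ∧
    0 ≤ (v.1 : ℚ) / (A₁ : ℚ) ∧ (v.1 : ℚ) / (A₁ : ℚ) < 1 ∧
    0 ≤ (v.2.2.1 : ℚ) / (A₂ : ℚ) ∧ (v.2.2.1 : ℚ) / (A₂ : ℚ) < 1 ∧
    0 ≤ (v.2.2.2 : ℚ) / (4 * (A₂ : ℚ)) ∧ (v.2.2.2 : ℚ) / (4 * (A₂ : ℚ)) < 1}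

/-- The splitting `s` in Plücker coordinates. -/
def ssplit (A₁ A₂ : ℤ) (v : ℤ × ℤ × ℤ × ℤ) : ℤ :=
  let D : ℤ := Int.gcd A₁ A₂
  let D₁ : ℤ := Int.gcd D v.1
  let D₂ : ℤ := D / D₁
  kron (kron (-1) (v.1 / D₁)) (-(A₁ * A₂)) * kron (A₁ / D) (A₂ / D) *
    kron (v.1 / D₁) (A₁ / D) * kron (4 * v.2.2.1 / D₂) (A₂.sign * A₂ / D) *
    kron D₁ v.2.1 * kron D₂ v.2.2.2

/-- The exponential sum `Σ(A₁,A₂;m₁,m₂)`. -/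
noncomputable def SigmaExp (A₁ A₂ m₁ m₂ : ℤ) : ℂ :=
  ∑' v : ↥(PlSet A₁ A₂),
    (ssplit A₁ A₂ v.val : ℂ) *
      e2pi ((m₁ : ℚ) * ((v.val.1 : ℚ) / (A₁ : ℚ)) + (m₂ : ℚ) * ((v.val.2.2.1 : ℚ) / (A₂ : ℚ)))

/-- The Gauss sum `g_η(2^i, m, 2^t)` restricted to `x ≡ η (mod 4)`. -/
noncomputable def gaussGEta (η : ℤ) (i : ℕ) (m : ℤ) (t : ℕ) : ℂ :=
  ∑ x ∈ Finset.filter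
      (fun x => Nat.gcd x (2 ^ max t 2) = 1 ∧ (x : ZMod 4) = (η : ZMod 4))
      (Finset.range (2 ^ max t 2)),
    (kron (x : ℤ) 2 ^ i : ℂ) * e2pi ((m : ℚ) * (x : ℚ) / ((2 : ℚ) ^ t))

/-
Write `B₁ = 2^j b₁` and `μ B₂ = 2^(ℓ-2-j) b₂` with `b₁, b₂` odd, and `γ = μ C₂`. The relation
`A₁C₂ + 4B₁B₂ + C₁A₂ = 0` then forces `C₁ = -(2^(k-ℓ) γ + b₁ b₂)`, so `S(2^k, μ 2^ℓ)` is
parametrized by `(j, b₁, b₂, γ)` with `0 ≤ j ≤ ℓ - 2`; for `ℓ ≤ 1` it is empty, as `C₁` would be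
even. On this parametrization the splitting is `ε(b₁) χ₈(b₁)^(k-ℓ) χ₈(C₁)^j χ₈(γ)^(ℓ-j)`, where
`ε(b₁) = 1` or `-μ` according as `b₁ ≡ 1` or `-1 (mod 4)`. The residue of `2^(k-ℓ)` modulo 8
(`0`, `4` or `2`) decides how the condition `C₁ ≡ -1 (mod 4)` and the value `χ₈(C₁)` depend on
`b₁ b₂`. Summing over `γ` then kills the terms with `j ≢ ℓ (mod 2)` and gives a factor `2^ℓ` to the
others, and the remaining sum over `(b₁, b₂)` splits along `b₁ ≡ ±1 (mod 4)` into products of the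
Gauss sums `g_{±1}`.
-/

open Finset ZMod

lemma pow_eq_pow_of_sq_eq_one {M : Type*} [Monoid M] {x : M} (hx : x ^ 2 = 1) {a b : ℕ}
    (h : a % 2 = b % 2) : x ^ a = x ^ b := by
  rw [pow_eq_pow_mod a hx, pow_eq_pow_mod b hx, h]

lemma two_pow_mul_odd_inj {a b x y : ℕ} (hx : Odd x) (hy : Odd y) (h : 2 ^ a * x = 2 ^ b * y) :
    a = b ∧ x = y := by
  have hval : ∀ e z : ℕ, Odd z → padicValNat 2 (2 ^ e * z) = e := fun e z hz => by
    rw [padicValNat.mul (by positivity) hz.pos.ne', padicValNat.prime_pow,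
      padicValNat.eq_zero_of_not_dvd hz.not_two_dvd_nat, add_zero]
  have hab : a = b := by rw [← hval a x hx, ← hval b y hy, h]
  subst hab
  exact ⟨rfl, Nat.eq_of_mul_eq_mul_left (by positivity) h⟩

lemma exists_odd_parts_of_four_mul_eq {ℓ n₁ n₂ c : ℕ} (hc : Odd c)
    (h : 4 * n₁ * n₂ = 2 ^ ℓ * c) :
    ∃ j b₁ b₂, j + 2 ≤ ℓ ∧ Odd b₁ ∧ Odd b₂ ∧ n₁ = 2 ^ j * b₁ ∧ n₂ = 2 ^ (ℓ - 2 - j) * b₂ ∧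
      b₁ * b₂ = c := by
  have hne : 4 * n₁ * n₂ ≠ 0 := h ▸ mul_ne_zero (by positivity) hc.pos.ne'
  obtain ⟨j, b₁, hb₁, rfl⟩ :=
    Nat.exists_eq_two_pow_mul_odd (right_ne_zero_of_mul (left_ne_zero_of_mul hne))
  obtain ⟨i, b₂, hb₂, rfl⟩ := Nat.exists_eq_two_pow_mul_odd (right_ne_zero_of_mul hne)
  have h' : 2 ^ (j + i + 2) * (b₁ * b₂) = 2 ^ ℓ * c := by rw [← h]; ring
  obtain ⟨hji, hbc⟩ := two_pow_mul_odd_inj (hb₁.mul hb₂) hc h'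
  exact ⟨j, b₁, b₂, by omega, hb₁, hb₂, rfl, by rw [show ℓ - 2 - j = i by omega], hbc⟩

lemma two_pow_mul_lt_two_pow_iff {a b n x : ℕ} (h : a + b = n) :
    2 ^ a * x < 2 ^ n ↔ x < 2 ^ b := by
  rw [← h, pow_add]
  exact Nat.mul_lt_mul_left (by positivity)

lemma two_pow_ediv_two_pow {a b : ℕ} (h : b ≤ a) : (2 : ℤ) ^ a / 2 ^ b = 2 ^ (a - b) := by
  rw [← Nat.sub_add_cancel h, pow_add, Int.mul_ediv_cancel _ (by positivity), Nat.add_sub_cancel]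

lemma sum_range_mul_of_periodic {M : Type*} [AddCommMonoid M] {f : ℕ → M} {n : ℕ}
    (hf : Function.Periodic f n) (N : ℕ) :
    ∑ x ∈ range (N * n), f x = N • ∑ x ∈ range n, f x := by
  induction N with
  | zero => simp
  | succ N ih =>
    rw [add_mul, one_mul, sum_range_add, ih, succ_nsmul]
    congr 1
    refine sum_congr rfl fun x _ => ?_
    rw [add_comm]
    exact_mod_cast hf.nat_mul N x

lemma natCast_zmod_four_of_odd {b : ℕ} (hb : Odd b) : (b : ZMod 4) = 1 ∨ (b : ZMod 4) = -1 := by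
  rw [← ZMod.natCast_mod]
  have := Nat.odd_iff.1 hb
  rcases (by omega : b % 4 = 1 ∨ b % 4 = 3) with h | h <;> rw [h]
  · exact Or.inl rfl
  · exact Or.inr rfl

lemma odd_of_natCast_zmod_four_eq {x : ℕ} {a : ℤ} (ha : Odd a) (h : (x : ZMod 4) = a) : Odd x := by
  have h2 := congrArg (ZMod.castHom (by norm_num : 2 ∣ 4) (ZMod 2)) h
  rw [map_natCast, map_intCast, ZMod.intCast_eq_one_iff_odd.2 ha] at h2
  exact ZMod.natCast_eq_one_iff_odd.1 h2

lemma Int.odd_of_modEq_neg_one {c : ℤ} (h : c ≡ -1 [ZMOD 4]) : Odd c := by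
  rw [Int.ModEq] at h
  rw [Int.odd_iff]
  omega

lemma Int.modEq_neg_one_four_iff {a : ℤ} : a ≡ -1 [ZMOD 4] ↔ (a : ZMod 4) = -1 := by
  have h := (ZMod.intCast_eq_intCast_iff a (-1) 4).symm
  push_cast at h
  exact h

lemma gcd_gcd_eq_one_of_odd {A b c : ℤ} {k : ℕ} (hA : A.natAbs = 2 ^ k) (hc : Odd c) :
    Int.gcd A (Int.gcd b c) = 1 := by
  have hg : Odd (Int.gcd b c) := (Int.natAbs_odd.2 hc).of_dvd_nat (Int.gcd_dvd_natAbs_right b c)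
  rw [Int.gcd_eq_natAbs, hA, Int.natAbs_natCast]
  exact Nat.Coprime.pow_left k (Nat.coprime_two_left.2 hg)

lemma zero_le_div_and_div_lt_one_iff {a b : ℤ} (ha : 0 < a) :
    (0 ≤ (b : ℚ) / a ∧ (b : ℚ) / a < 1) ↔ (0 ≤ b ∧ b < a) := by
  have ha' : (0 : ℚ) < a := by exact_mod_cast ha
  rw [div_nonneg_iff, div_lt_one ha']
  constructor
  · rintro ⟨h | h, hlt⟩
    · exact ⟨by exact_mod_cast h.1, by exact_mod_cast hlt⟩
    · exact absurd h.2 ha'.not_ge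
  · rintro ⟨h0, hlt⟩
    exact ⟨Or.inl ⟨by exact_mod_cast h0, ha'.le⟩, by exact_mod_cast hlt⟩

lemma e2pi_add (r s : ℚ) : e2pi (r + s) = e2pi r * e2pi s := by
  rw [e2pi, e2pi, e2pi, ← Complex.exp_add]
  congr 1
  push_cast
  ring

lemma χ₈_neg (x : ZMod 8) : χ₈ (-x) = χ₈ x := by
  revert x; decide

lemma χ₈_sq_of_odd {x : ℤ} (hx : Odd x) : χ₈ x ^ 2 = 1 := by
  have := Int.odd_iff.1 hx
  rw [χ₈_int_eq_if_mod_eight, if_neg (by omega)]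
  split_ifs <;> norm_num

lemma kron_two_pow_right (a : ℤ) (t : ℕ) : kron a (2 ^ t) = χ₈ a ^ t := by
  have hsign : ¬(a < 0 ∧ (2 : ℤ) ^ t < 0) := fun h => (pow_pos two_pos t).not_gt h.2
  rw [kron, if_neg (pow_ne_zero t two_ne_zero), if_neg hsign, one_mul, Int.natAbs_pow,
    show (2 : ℤ).natAbs = 2 from rfl, Nat.Prime.factorization_pow Nat.prime_two,
    Finsupp.prod_single_index (by simp), kronPrime, if_pos rfl, χ₈_int_eq_if_mod_eight]

lemma kron_two (a : ℤ) : kron a 2 = χ₈ a := by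
  simpa using kron_two_pow_right a 1

lemma kron_eq_jacobiSym {a c : ℤ} (hc : Odd c) (hsign : 0 ≤ a ∨ 0 < c) :
    kron a c = jacobiSym a c.natAbs := by
  have hc0 : c ≠ 0 := by rintro rfl; exact Int.not_odd_zero hc
  have hjac : ∀ x y : ℕ, x.Coprime y → jacobiSym a (x * y) = jacobiSym a x * jacobiSym a y := by
    intro x y hxy
    rcases eq_or_ne x 0 with rfl | hx
    · simp [(Nat.coprime_zero_left y).1 hxy]
    rcases eq_or_ne y 0 with rfl | hy
    · simp [(Nat.coprime_zero_right x).1 hxy]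
    exact jacobiSym.mul_right' a hx hy
  rw [kron, if_neg hc0, if_neg (by omega), one_mul, Nat.multiplicative_factorization _ hjac
    (jacobiSym.one_right a) (Int.natAbs_ne_zero.2 hc0)]
  refine Finsupp.prod_congr fun p hp => ?_
  have hp2 : p ≠ 2 := by
    rintro rfl
    exact (Int.natAbs_odd.2 hc).not_two_dvd_nat (Nat.dvd_of_mem_primeFactors hp)
  rw [kronPrime, if_neg hp2, jacobiSym.pow_right]

lemma kron_two_pow_left (t : ℕ) {c : ℤ} (hc : Odd c) : kron (2 ^ t) c = χ₈ c ^ t := by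
  rw [kron_eq_jacobiSym hc (Or.inl (by positivity)), jacobiSym.pow_left,
    jacobiSym.at_two (Int.natAbs_odd.2 hc), ← Int.cast_natCast, Int.natCast_natAbs]
  rcases abs_choice c with h | h <;> rw [h]
  push_cast
  rw [χ₈_neg]

lemma kron_neg_one_natCast {b : ℕ} (hb : Odd b) : kron (-1) b = χ₄ b := by
  rw [kron_eq_jacobiSym (by exact_mod_cast hb) (Or.inr (by exact_mod_cast hb.pos)),
    Int.natAbs_natCast, jacobiSym.at_neg_one hb]

lemma kron_one_left (n : ℤ) : kron 1 n = 1 := by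
  rw [kron]
  split_ifs with hn h1 hsign
  · rfl
  · simp at h1
  · exact absurd hsign.1 one_pos.not_gt
  · refine (one_mul _).trans (Finset.prod_eq_one fun p _ => ?_)
    have h1 : kronPrime 1 p = 1 := by
      unfold kronPrime
      split_ifs <;> norm_num [jacobiSym.one_left] at *
    simp only [h1, one_pow]

lemma kron_one_right (a : ℤ) : kron a 1 = 1 := by
  simp [kron]

lemma kron_eq_one_of_natAbs_eq_one {a n : ℤ} (ha : 0 ≤ a) (hn : n.natAbs = 1) : kron a n = 1 := by
  rw [kron, if_neg (by rintro rfl; simp at hn), if_neg (by omega), hn]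
  simp

lemma kron_neg_one_mul_two_pow {ν : ℤ} (hν : ν = 1 ∨ ν = -1) (t : ℕ) :
    kron (-1) (ν * 2 ^ t) = ν := by
  have hν0 : ν * 2 ^ t ≠ 0 := mul_ne_zero (by rcases hν with rfl | rfl <;> norm_num) (by positivity)
  have habs : (ν * 2 ^ t).natAbs = 2 ^ t := by
    rcases hν with rfl | rfl <;> simp [Int.natAbs_pow]
  rw [kron, if_neg hν0, habs, Nat.Prime.factorization_pow Nat.prime_two,
    Finsupp.prod_single_index (by simp), show kronPrime (-1) 2 = 1 by decide, one_pow, mul_one]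
  rcases hν with rfl | rfl
  · simp
  · rw [if_pos ⟨by norm_num, by simp⟩]

lemma kron_kron_neg_one_of_odd {μ : ℤ} (hμ : μ = 1 ∨ μ = -1) {b : ℕ} (hb : Odd b) (k ℓ : ℕ) :
    kron (kron (-1) b) (-(2 ^ k * (μ * 2 ^ ℓ))) = if (b : ZMod 4) = 1 then 1 else -μ := by
  rw [kron_neg_one_natCast hb]
  rcases natCast_zmod_four_of_odd hb with h | h <;> rw [h]
  · exact kron_one_left _
  · rw [if_neg (by decide), show χ₄ (-1) = -1 by decide,
      show -(2 ^ k * (μ * 2 ^ ℓ)) = -μ * 2 ^ (k + ℓ) by ring]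
    exact kron_neg_one_mul_two_pow (by rcases hμ with rfl | rfl <;> simp) _

noncomputable def gaussTerm (η : ℤ) (i : ℕ) (m : ℤ) (t x : ℕ) : ℂ :=
  if Odd x ∧ (x : ZMod 4) = η then
    (kron (x : ℤ) 2 ^ i : ℂ) * e2pi ((m : ℚ) * (x : ℚ) / ((2 : ℚ) ^ t))
  else 0

lemma gaussGEta_eq_sum_gaussTerm (η : ℤ) (i : ℕ) (m : ℤ) {t : ℕ} (ht : 2 ≤ t) :
    gaussGEta η i m t = ∑ x ∈ range (2 ^ t), gaussTerm η i m t x := by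
  rw [gaussGEta, max_eq_left ht, sum_filter]
  refine sum_congr rfl fun x _ => ?_
  exact if_congr (and_congr_left'
    ((Nat.coprime_pow_right_iff (by omega) x 2).trans Nat.coprime_two_right)) rfl rfl

lemma gaussGEta_congr_pow (η : ℤ) {i i' : ℕ} (h : i % 2 = i' % 2) (m : ℤ) (t : ℕ) :
    gaussGEta η i m t = gaussGEta η i' m t := by
  refine sum_congr rfl fun x hx => ?_
  have hodd : Odd x := Nat.coprime_two_right.1
    ((Nat.coprime_pow_right_iff (by omega) x 2).1 (mem_filter.1 hx).2.1)
  have hsq : ((kron (x : ℤ) 2 : ℤ) : ℂ) ^ 2 = 1 := by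
    rw [kron_two]; exact_mod_cast χ₈_sq_of_odd (x := x) (by exact_mod_cast hodd)
  rw [pow_eq_pow_of_sq_eq_one hsq h]

lemma sum_range_mul_eight_ite_χ₈_pow (N p : ℕ) {c : ZMod 4} (hc : c = 1 ∨ c = -1) :
    ∑ γ ∈ range (N * 8), (if (γ : ZMod 4) = c then (χ₈ γ : ℂ) ^ p else 0) = N * (1 + (-1) ^ p) := by
  have hper :
      Function.Periodic (fun γ : ℕ => if (γ : ZMod 4) = c then (χ₈ γ : ℂ) ^ p else 0) 8 := by
    intro x
    simp only [Nat.cast_add, show ((8 : ℕ) : ZMod 4) = 0 by decide,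
      show ((8 : ℕ) : ZMod 8) = 0 by decide, add_zero]
  rw [sum_range_mul_of_periodic hper, nsmul_eq_mul]
  congr 1
  rcases hc with rfl | rfl
  · simp +decide [sum_range_succ]
  · simp +decide [sum_range_succ, add_comm]

def plParam (k ℓ : ℕ) (μ : ℤ) : (Σ _ : ℕ, ℕ × ℕ × ℕ) → ℤ × ℤ × ℤ × ℤ
  | ⟨j, b₁, b₂, γ⟩ => (2 ^ j * b₁, -(2 ^ (k - ℓ) * γ + b₁ * b₂), μ * (2 ^ (ℓ - 2 - j) * b₂), μ * γ)

def PlCond (k ℓ : ℕ) (μ : ℤ) (b₁ b₂ γ : ℕ) : Prop :=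
  Odd b₁ ∧ Odd b₂ ∧ (γ : ZMod 4) = -μ ∧ (b₁ * b₂ + 2 ^ (k - ℓ) * γ : ZMod 4) = 1

instance (k ℓ : ℕ) (μ : ℤ) (b₁ b₂ γ : ℕ) : Decidable (PlCond k ℓ μ b₁ b₂ γ) := by
  unfold PlCond; infer_instance

def plDomain (k ℓ : ℕ) (μ : ℤ) : Finset (Σ _ : ℕ, ℕ × ℕ × ℕ) :=
  (range (ℓ - 1)).sigma fun j =>
    {y ∈ range (2 ^ (k - j)) ×ˢ range (2 ^ (j + 2)) ×ˢ range (2 ^ (ℓ + 2)) |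
      PlCond k ℓ μ y.1 y.2.1 y.2.2}

noncomputable def sigmaTerm (A₁ A₂ m₁ m₂ : ℤ) (v : ℤ × ℤ × ℤ × ℤ) : ℂ :=
  (ssplit A₁ A₂ v : ℂ) *
    e2pi ((m₁ : ℚ) * ((v.1 : ℚ) / (A₁ : ℚ)) + (m₂ : ℚ) * ((v.2.2.1 : ℚ) / (A₂ : ℚ)))

def mod4 : ZMod 8 →+* ZMod 4 := ZMod.castHom (by norm_num) (ZMod 4)

/-- Read `d` as `2^(k-ℓ)` and `c` as `b₁ b₂`, so that `-(d γ + c)` is `C₁` modulo 8: the condition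
`C₁ ≡ -1 (mod 4)` becomes `c ≡ η (mod 4)`, under which `χ₈ C₁ = σ χ₈ c`. -/
def GaussRegime (d : ZMod 8) (μ η σ : ℤ) : Prop :=
  ∀ c γ : ZMod 8, mod4 γ = -μ →
    (mod4 (c + d * γ) = 1 ↔ mod4 c = η) ∧ (mod4 c = η → χ₈ (-(d * γ + c)) = σ * χ₈ c)

section

variable {k ℓ : ℕ} {μ : ℤ}

lemma mem_plDomain {j b₁ b₂ γ : ℕ} :
    ⟨j, (b₁, b₂, γ)⟩ ∈ plDomain k ℓ μ ↔
      j + 2 ≤ ℓ ∧ b₁ < 2 ^ (k - j) ∧ b₂ < 2 ^ (j + 2) ∧ γ < 2 ^ (ℓ + 2) ∧ PlCond k ℓ μ b₁ b₂ γ := by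
  simp only [plDomain, mem_sigma, mem_filter, mem_product, mem_range, and_assoc]
  rw [show j < ℓ - 1 ↔ j + 2 ≤ ℓ by omega]

lemma mem_plSet_iff (hμ : μ = 1 ∨ μ = -1) {B₁ C₁ B₂ C₂ : ℤ} :
    (B₁, C₁, B₂, C₂) ∈ PlSet (2 ^ k) (μ * 2 ^ ℓ) ↔
      2 ^ k * C₂ + 4 * B₁ * B₂ + C₁ * (μ * 2 ^ ℓ) = 0 ∧ (C₁ : ZMod 4) = -1 ∧ (C₂ : ZMod 4) = -1 ∧
        (0 ≤ B₁ ∧ B₁ < 2 ^ k) ∧ (0 ≤ μ * B₂ ∧ μ * B₂ < 2 ^ ℓ) ∧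
        (0 ≤ μ * C₂ ∧ μ * C₂ < 2 ^ (ℓ + 2)) := by
  have hdiv : ∀ b a : ℤ, (b : ℚ) / ((μ * a : ℤ) : ℚ) = ((μ * b : ℤ) : ℚ) / (a : ℚ) := by
    rcases hμ with rfl | rfl <;> intro b a <;> push_cast <;> ring
  have hdiv4 :
      (C₂ : ℚ) / (4 * ((μ * 2 ^ ℓ : ℤ) : ℚ)) = ((μ * C₂ : ℤ) : ℚ) / ((2 ^ (ℓ + 2) : ℤ) : ℚ) := by
    rw [← hdiv]; push_cast; ring
  have habs : (μ * 2 ^ ℓ).natAbs = 2 ^ ℓ := by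
    rcases hμ with rfl | rfl <;> simp [Int.natAbs_pow]
  have hA₁ : (0 : ℤ) < 2 ^ k := by positivity
  have hA₂ : (0 : ℤ) < 2 ^ ℓ := by positivity
  have hA₃ : (0 : ℤ) < 2 ^ (ℓ + 2) := by positivity
  simp only [PlSet, Set.mem_ofPred_eq]
  rw [hdiv4, hdiv B₂, Int.modEq_neg_one_four_iff, Int.modEq_neg_one_four_iff]
  constructor
  · rintro ⟨heq, -, -, hC₁, hC₂, h₁, h₁', h₂, h₂', h₃, h₃'⟩
    exact ⟨heq, hC₁, hC₂, (zero_le_div_and_div_lt_one_iff hA₁).1 ⟨h₁, h₁'⟩,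
      (zero_le_div_and_div_lt_one_iff hA₂).1 ⟨h₂, h₂'⟩,
      (zero_le_div_and_div_lt_one_iff hA₃).1 ⟨h₃, h₃'⟩⟩
  · rintro ⟨heq, hC₁, hC₂, hB₁, hB₂, hγ⟩
    obtain ⟨h₁, h₁'⟩ := (zero_le_div_and_div_lt_one_iff hA₁).2 hB₁
    obtain ⟨h₂, h₂'⟩ := (zero_le_div_and_div_lt_one_iff hA₂).2 hB₂
    obtain ⟨h₃, h₃'⟩ := (zero_le_div_and_div_lt_one_iff hA₃).2 hγ
    exact ⟨heq, gcd_gcd_eq_one_of_odd (k := k) (by simp [Int.natAbs_pow])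
      (Int.odd_of_modEq_neg_one (Int.modEq_neg_one_four_iff.2 hC₁)),
      gcd_gcd_eq_one_of_odd habs (Int.odd_of_modEq_neg_one (Int.modEq_neg_one_four_iff.2 hC₂)),
      hC₁, hC₂, h₁, h₁', h₂, h₂', h₃, h₃'⟩

lemma plSet_eq_empty (hℓ : ℓ ≤ 1) (hkℓ : ℓ < k) (hμ : Odd μ) :
    PlSet (2 ^ k) (μ * 2 ^ ℓ) = ∅ := by
  refine Set.eq_empty_of_forall_notMem fun v hv => ?_
  obtain ⟨heq, -, -, hC₁, -⟩ := hv
  have h4 : (2 : ℤ) ^ (ℓ + 1) ∣ 4 := (pow_dvd_pow 2 (by omega : ℓ + 1 ≤ 2)).trans (by norm_num)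
  have hsum : (2 : ℤ) ^ (ℓ + 1) ∣ 2 ^ k * v.2.2.2 + 4 * v.1 * v.2.2.1 :=
    dvd_add (dvd_mul_of_dvd_left (pow_dvd_pow 2 hkℓ) _)
      (dvd_mul_of_dvd_left (dvd_mul_of_dvd_left h4 _) _)
  have hdvd : 2 * 2 ^ ℓ ∣ (v.2.1 * μ) * 2 ^ ℓ := by
    rw [← pow_succ', mul_assoc]
    exact (dvd_add_right hsum).1 (heq ▸ dvd_zero _)
  have h2 : (2 : ℤ) ∣ v.2.1 * μ := (mul_dvd_mul_iff_right (by positivity)).1 hdvd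
  exact Int.not_even_iff_odd.2 ((Int.odd_of_modEq_neg_one hC₁).mul hμ) (even_iff_two_dvd.2 h2)

lemma plParam_mem_plSet (hμ : μ = 1 ∨ μ = -1) (hkℓ : ℓ < k)
    {j b₁ b₂ γ : ℕ} (hj : j + 2 ≤ ℓ) (hb₁ : b₁ < 2 ^ (k - j)) (hb₂ : b₂ < 2 ^ (j + 2))
    (hγ : γ < 2 ^ (ℓ + 2)) (hc : PlCond k ℓ μ b₁ b₂ γ) :
    plParam k ℓ μ ⟨j, b₁, b₂, γ⟩ ∈ PlSet (2 ^ k) (μ * 2 ^ ℓ) := by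
  obtain ⟨-, -, hγ4, hC₁⟩ := hc
  have hμμ : μ * μ = 1 := by rcases hμ with rfl | rfl <;> norm_num
  have hk : (2 : ℤ) ^ k = 2 ^ (k - ℓ) * 2 ^ ℓ := by rw [← pow_add, Nat.sub_add_cancel hkℓ.le]
  have hℓ : (2 : ℤ) ^ ℓ = 4 * 2 ^ j * 2 ^ (ℓ - 2 - j) := by
    rw [show (4 : ℤ) = 2 ^ 2 by norm_num, ← pow_add, ← pow_add]; congr 1; omega
  rw [plParam, mem_plSet_iff hμ]
  refine ⟨?_, ?_, ?_,
    ⟨by positivity, by exact_mod_cast (two_pow_mul_lt_two_pow_iff (by omega)).2 hb₁⟩, ?_, ?_⟩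
  · rw [hk, hℓ]; ring
  · push_cast
    linear_combination -hC₁
  · push_cast
    rw [hγ4]
    rcases hμ with rfl | rfl <;> norm_num
  · rw [← mul_assoc, hμμ, one_mul]
    exact ⟨by positivity, by exact_mod_cast (two_pow_mul_lt_two_pow_iff (by omega)).2 hb₂⟩
  · rw [← mul_assoc, hμμ, one_mul]
    exact ⟨by positivity, by exact_mod_cast hγ⟩

lemma exists_plParam_eq_of_mem_plSet (hμ : μ = 1 ∨ μ = -1) (hkℓ : ℓ < k)
    {v : ℤ × ℤ × ℤ × ℤ} (hv : v ∈ PlSet (2 ^ k) (μ * 2 ^ ℓ)) :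
    ∃ x ∈ plDomain k ℓ μ, plParam k ℓ μ x = v := by
  obtain ⟨B₁, C₁, B₂, C₂⟩ := v
  obtain ⟨heq, hC₁, hC₂, ⟨hB₁0, hB₁⟩, ⟨hB₂0, hB₂⟩, ⟨hγ0, hγ⟩⟩ := (mem_plSet_iff hμ).1 hv
  have hμμ : μ * μ = 1 := by rcases hμ with rfl | rfl <;> norm_num
  lift B₁ to ℕ using hB₁0 with n₁
  obtain ⟨n₂, hn₂⟩ := Int.eq_ofNat_of_zero_le hB₂0
  obtain ⟨γ, hγ'⟩ := Int.eq_ofNat_of_zero_le hγ0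
  have hk : (2 : ℤ) ^ k = 2 ^ (k - ℓ) * 2 ^ ℓ := by rw [← pow_add, Nat.sub_add_cancel hkℓ.le]
  have hceq : 4 * (n₁ : ℤ) * n₂ = 2 ^ ℓ * (-C₁ - 2 ^ (k - ℓ) * γ) := by
    rw [← hn₂, ← hγ']
    linear_combination μ * heq - (μ * C₂) * hk - 2 ^ ℓ * C₁ * hμμ
  have hcodd : Odd (-C₁ - 2 ^ (k - ℓ) * γ) := by
    have h2 : Even ((2 : ℤ) ^ (k - ℓ) * γ) :=
      (Int.even_pow.2 ⟨even_two, by omega⟩).mul_right _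
    exact (Int.odd_of_modEq_neg_one (Int.modEq_neg_one_four_iff.2 hC₁)).neg.sub_even h2
  have hc0 : 0 ≤ -C₁ - 2 ^ (k - ℓ) * γ :=
    nonneg_of_mul_nonneg_right (hceq ▸ by positivity) (by positivity : (0 : ℤ) < 2 ^ ℓ)
  obtain ⟨c, hc⟩ := Int.eq_ofNat_of_zero_le hc0
  rw [hc] at hceq hcodd
  obtain ⟨j, b₁, b₂, hj, hb₁, hb₂, rfl, rfl, rfl⟩ :=
    exists_odd_parts_of_four_mul_eq (by exact_mod_cast hcodd) (by exact_mod_cast hceq)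
  refine ⟨⟨j, b₁, b₂, γ⟩, mem_plDomain.2 ⟨hj, ?_, ?_, ?_, hb₁, hb₂, ?_, ?_⟩, ?_⟩
  · exact (two_pow_mul_lt_two_pow_iff (show j + (k - j) = k by omega)).1 (by exact_mod_cast hB₁)
  · rw [hn₂] at hB₂
    exact (two_pow_mul_lt_two_pow_iff (show ℓ - 2 - j + (j + 2) = ℓ by omega)).1
      (by exact_mod_cast hB₂)
  · exact_mod_cast hγ' ▸ hγ
  · rw [← Int.cast_natCast, ← hγ']
    push_cast
    rw [hC₂, mul_neg_one]
  · have := congrArg (Int.cast : ℤ → ZMod 4) hc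
    push_cast at this
    rw [← this, hC₁]
    ring
  · push_cast at hc hn₂
    simp only [plParam, Prod.mk.injEq]
    refine ⟨by push_cast; ring, by linear_combination hc, ?_, ?_⟩
    · linear_combination -μ * hn₂ + B₂ * hμμ
    · linear_combination -μ * hγ' + C₂ * hμμ

lemma plParam_injOn (hμ : μ ≠ 0) :
    Set.InjOn (plParam k ℓ μ) (plDomain k ℓ μ) := by
  rintro ⟨j, b₁, b₂, γ⟩ hx ⟨j', b₁', b₂', γ'⟩ hy h
  obtain ⟨-, -, -, -, hb₁, -⟩ := mem_plDomain.1 hx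
  obtain ⟨-, -, -, -, hb₁', -⟩ := mem_plDomain.1 hy
  simp only [plParam, Prod.mk.injEq] at h
  obtain ⟨h₁, -, h₃, h₄⟩ := h
  obtain ⟨rfl, rfl⟩ := two_pow_mul_odd_inj hb₁ hb₁' (by exact_mod_cast h₁)
  obtain rfl : b₂ = b₂' := by
    exact_mod_cast mul_left_cancel₀ (pow_ne_zero _ two_ne_zero) (mul_left_cancel₀ hμ h₃)
  obtain rfl : γ = γ' := by exact_mod_cast mul_left_cancel₀ hμ h₄
  rfl

lemma plSet_eq_image (hμ : μ = 1 ∨ μ = -1) (hkℓ : ℓ < k) :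
    PlSet (2 ^ k) (μ * 2 ^ ℓ) =
      plParam k ℓ μ '' plDomain k ℓ μ := by
  ext v
  refine ⟨fun hv => exists_plParam_eq_of_mem_plSet hμ hkℓ hv, ?_⟩
  rintro ⟨⟨j, b₁, b₂, γ⟩, hx, rfl⟩
  obtain ⟨hj, hb₁, hb₂, hγ, hc⟩ := mem_plDomain.1 hx
  exact plParam_mem_plSet hμ hkℓ hj hb₁ hb₂ hγ hc

lemma sigmaExp_eq_sum_plDomain (hμ : μ = 1 ∨ μ = -1) (hkℓ : ℓ < k)
    (m₁ m₂ : ℤ) :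
    SigmaExp (2 ^ k) (μ * 2 ^ ℓ) m₁ m₂ = ∑ x ∈ plDomain k ℓ μ,
      sigmaTerm (2 ^ k) (μ * 2 ^ ℓ) m₁ m₂ (plParam k ℓ μ x) := by
  have hinj := plParam_injOn (k := k) (ℓ := ℓ) (by rcases hμ with rfl | rfl <;> norm_num : μ ≠ 0)
  have hS : PlSet (2 ^ k) (μ * 2 ^ ℓ) = ↑((plDomain k ℓ μ).image (plParam k ℓ μ)) := by
    rw [coe_image]; exact plSet_eq_image hμ hkℓ
  show ∑' v : ↥(PlSet _ _), sigmaTerm _ _ m₁ m₂ v.1 = _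
  rw [hS, Finset.tsum_subtype', sum_image hinj]

lemma ssplit_plParam (hμ : μ = 1 ∨ μ = -1) (hkℓ : ℓ < k) {j b₁ b₂ γ : ℕ}
    (hj : j + 2 ≤ ℓ) (hb₁ : Odd b₁) (hb₂ : Odd b₂) (hγ : Odd γ) :
    ssplit (2 ^ k) (μ * 2 ^ ℓ) (plParam k ℓ μ ⟨j, b₁, b₂, γ⟩) =
      (if (b₁ : ZMod 4) = 1 then 1 else -μ) * χ₈ b₁ ^ (k - ℓ) *
        χ₈ (-(2 ^ (k - ℓ) * γ + b₁ * b₂)) ^ j * χ₈ γ ^ (ℓ - j) := by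
  have habs : (μ * 2 ^ ℓ).natAbs = 2 ^ ℓ := by
    rcases hμ with rfl | rfl <;> simp [Int.natAbs_pow]
  have hD : ((Int.gcd (2 ^ k) (μ * 2 ^ ℓ) : ℕ) : ℤ) = 2 ^ ℓ := by
    rw [Int.gcd_eq_natAbs, habs, show ((2 : ℤ) ^ k).natAbs = 2 ^ k by simp [Int.natAbs_pow],
      Nat.gcd_eq_right (pow_dvd_pow 2 hkℓ.le)]
    push_cast; rfl
  have hD₁ : ((Int.gcd (2 ^ ℓ) (2 ^ j * b₁) : ℕ) : ℤ) = 2 ^ j := by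
    have h : Nat.gcd (2 ^ ℓ) (2 ^ j * b₁) = 2 ^ j := by
      rw [← Nat.add_sub_cancel' (by omega : j ≤ ℓ), pow_add, Nat.gcd_mul_left,
        (Nat.Coprime.pow_left _ (Nat.coprime_two_left.2 hb₁)).gcd_eq_one, mul_one]
    rw [← Int.gcd_natCast_natCast] at h
    push_cast at h
    rw [h]; push_cast; rfl
  have hsign : (μ * 2 ^ ℓ).sign * (μ * 2 ^ ℓ) = 2 ^ ℓ := by
    rw [Int.sign_mul_self_eq_natAbs, habs]; push_cast; rfl
  have hC₁ : Odd (-(2 ^ (k - ℓ) * (γ : ℤ) + b₁ * b₂)) :=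
    (((Int.even_pow.2 ⟨even_two, by omega⟩).mul_right _).add_odd
      (by exact_mod_cast hb₁.mul hb₂)).neg
  have hμγ : Odd (μ * γ) :=
    (by rcases hμ with rfl | rfl <;> decide : Odd μ).mul (by exact_mod_cast hγ)
  have hχμ : χ₈ (μ : ZMod 8) = 1 := by rcases hμ with rfl | rfl <;> decide
  simp only [ssplit, plParam]
  rw [hD, hD₁, Int.mul_ediv_cancel_left _ (by positivity), two_pow_ediv_two_pow hkℓ.le,
    Int.mul_ediv_cancel _ (by positivity), two_pow_ediv_two_pow (by omega), hsign,
    Int.ediv_self (by positivity), kron_one_right,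
    kron_two_pow_left _ hC₁, kron_two_pow_left _ hμγ, kron_kron_neg_one_of_odd hμ hb₁,
    kron_eq_one_of_natAbs_eq_one (a := 2 ^ (k - ℓ)) (by positivity)
      (by rcases hμ with rfl | rfl <;> rfl),
    kron_two_pow_right]
  push_cast [map_mul, hχμ]
  ring

lemma e2pi_plParam (hμ : μ = 1 ∨ μ = -1) (hkℓ : ℓ < k) {j : ℕ}
    (hj : j + 2 ≤ ℓ) (m₁ m₂ : ℤ) (b₁ b₂ γ : ℕ) :
    e2pi ((m₁ : ℚ) * (((plParam k ℓ μ ⟨j, b₁, b₂, γ⟩).1 : ℚ) / ((2 ^ k : ℤ) : ℚ)) +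
        (m₂ : ℚ) * (((plParam k ℓ μ ⟨j, b₁, b₂, γ⟩).2.2.1 : ℚ) / ((μ * 2 ^ ℓ : ℤ) : ℚ))) =
      e2pi ((m₁ : ℚ) * b₁ / 2 ^ (k - j)) * e2pi ((m₂ : ℚ) * b₂ / 2 ^ (j + 2)) := by
  have hμ0 : (μ : ℚ) ≠ 0 := by rcases hμ with rfl | rfl <;> norm_num
  have hk : (2 : ℚ) ^ k = 2 ^ j * 2 ^ (k - j) := by rw [← pow_add]; congr 1; omega
  have hℓ : (2 : ℚ) ^ ℓ = 2 ^ (ℓ - 2 - j) * 2 ^ (j + 2) := by rw [← pow_add]; congr 1; omega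
  rw [← e2pi_add]
  congr 1
  simp only [plParam]
  push_cast
  rw [hk, hℓ]
  field_simp

lemma gaussRegime_of_three_le {n : ℕ} (hn : 3 ≤ n) (hμ : μ = 1 ∨ μ = -1) :
    GaussRegime (2 ^ n) μ 1 1 := by
  rw [← Nat.sub_add_cancel hn, pow_add, show (2 : ZMod 8) ^ 3 = 0 by decide, mul_zero]
  unfold GaussRegime
  rcases hμ with rfl | rfl <;> decide

lemma gaussRegime_two_pow_two (hμ : μ = 1 ∨ μ = -1) : GaussRegime (2 ^ 2) μ 1 (-1) := by
  unfold GaussRegime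
  rcases hμ with rfl | rfl <;> decide

lemma gaussRegime_two_pow_one (hμ : μ = 1 ∨ μ = -1) : GaussRegime (2 ^ 1) μ (-1) (-μ) := by
  unfold GaussRegime
  rcases hμ with rfl | rfl <;> decide

lemma ite_sigmaTerm_plParam {η σ : ℤ} (hμ : μ = 1 ∨ μ = -1) (hkℓ : ℓ < k)
    (hreg : GaussRegime (2 ^ (k - ℓ)) μ η σ) {j : ℕ} (hj : j + 2 ≤ ℓ) (m₁ m₂ : ℤ)
    (b₁ b₂ γ : ℕ) :
    (if PlCond k ℓ μ b₁ b₂ γ then sigmaTerm (2 ^ k) (μ * 2 ^ ℓ) m₁ m₂ (plParam k ℓ μ ⟨j, b₁, b₂, γ⟩)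
      else 0) =
      σ ^ j * (gaussTerm 1 (k - ℓ + j) m₁ (k - j) b₁ * gaussTerm η j m₂ (j + 2) b₂ +
        -μ * (gaussTerm (-1) (k - ℓ + j) m₁ (k - j) b₁ * gaussTerm (-η) j m₂ (j + 2) b₂)) *
      (if (γ : ZMod 4) = -μ then (χ₈ γ : ℂ) ^ (ℓ - j) else 0) := by
  by_cases hγ₄ : (γ : ZMod 4) = -μ
  swap
  · simp [PlCond, hγ₄]
  by_cases hb₁ : Odd b₁
  swap
  · simp [PlCond, gaussTerm, hb₁]
  by_cases hb₂ : Odd b₂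
  swap
  · simp [PlCond, gaussTerm, hb₂]
  have hγ : Odd γ := odd_of_natCast_zmod_four_eq (a := -μ)
    (by rcases hμ with rfl | rfl <;> decide) (by rw [hγ₄]; push_cast; rfl)
  obtain ⟨hiff, hχ⟩ := hreg (b₁ * b₂) γ (by rw [map_natCast, hγ₄])
  simp only [map_add, map_mul, map_pow, map_natCast, map_ofNat] at hiff hχ
  have hcond : PlCond k ℓ μ b₁ b₂ γ ↔ (b₁ * b₂ : ZMod 4) = η := by
    rw [PlCond, and_iff_right hb₁, and_iff_right hb₂, and_iff_right hγ₄, hiff]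
  rw [if_congr hcond rfl rfl, sigmaTerm, ssplit_plParam hμ hkℓ hj hb₁ hb₂ hγ,
    e2pi_plParam hμ hkℓ hj, if_pos hγ₄]
  simp only [gaussTerm, hb₁, hb₂, true_and, kron_two]
  push_cast
  rcases natCast_zmod_four_of_odd hb₁ with h₁ | h₁
  · have h1 : ¬((1 : ZMod 4) = -1) := by decide
    simp only [h₁, one_mul, h1, ↓reduceIte, zero_mul, mul_zero, add_zero]
    split_ifs with h₂
    · rw [hχ (by rw [h₁, one_mul, h₂])]; push_cast; ring
    · simp
  · have h1 : ¬((-1 : ZMod 4) = 1) := by decide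
    have h₂' : ((-1 : ZMod 4) * b₂ = η) ↔ (b₂ : ZMod 4) = -η := by
      rw [neg_one_mul, neg_eq_iff_eq_neg]
    simp only [h₁, h1, h₂', ↓reduceIte, zero_mul, zero_add]
    split_ifs with h₂
    · rw [hχ (by rw [h₁, h₂]; ring)]; push_cast; ring
    · simp

lemma sum_sigmaTerm_fiber {η σ : ℤ} (hμ : μ = 1 ∨ μ = -1) (hkℓ : ℓ < k)
    (hreg : GaussRegime (2 ^ (k - ℓ)) μ η σ) {j : ℕ} (hj : j + 2 ≤ ℓ) (m₁ m₂ : ℤ) :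
    ∑ y ∈ range (2 ^ (k - j)) ×ˢ range (2 ^ (j + 2)) ×ˢ range (2 ^ (ℓ + 2)) with
        PlCond k ℓ μ y.1 y.2.1 y.2.2, sigmaTerm (2 ^ k) (μ * 2 ^ ℓ) m₁ m₂ (plParam k ℓ μ ⟨j, y⟩) =
      σ ^ j * (gaussGEta 1 (k - ℓ + j) m₁ (k - j) * gaussGEta η j m₂ (j + 2) +
        -μ * (gaussGEta (-1) (k - ℓ + j) m₁ (k - j) * gaussGEta (-η) j m₂ (j + 2))) *
      (2 ^ (ℓ - 1) * (1 + (-1) ^ (ℓ - j))) := by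
  rw [sum_filter, sum_product]
  simp_rw [sum_product, ite_sigmaTerm_plParam hμ hkℓ hreg hj, ← mul_sum, ← sum_mul]
  rw [show 2 ^ (ℓ + 2) = 2 ^ (ℓ - 1) * 8 by rw [show 8 = 2 ^ 3 by rfl, ← pow_add]; congr 1; omega,
    sum_range_mul_eight_ite_χ₈_pow _ _ (by rcases hμ with rfl | rfl <;> decide)]
  rw [gaussGEta_eq_sum_gaussTerm _ _ _ (by omega), gaussGEta_eq_sum_gaussTerm _ _ _ (by omega),
    gaussGEta_eq_sum_gaussTerm _ _ _ (by omega), gaussGEta_eq_sum_gaussTerm _ _ _ (by omega),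
    sum_mul_sum, sum_mul_sum]
  simp only [mul_add, mul_sum, sum_add_distrib, Nat.cast_pow, Nat.cast_ofNat]

lemma sigmaExp_eq_of_gaussRegime {η σ : ℤ} (hμ : μ = 1 ∨ μ = -1) (hkℓ : ℓ < k)
    (hσ : σ = 1 ∨ σ = -1) (hreg : GaussRegime (2 ^ (k - ℓ)) μ η σ) (m₁ m₂ : ℤ) :
    SigmaExp (2 ^ k) (μ * 2 ^ ℓ) m₁ m₂ =
      σ ^ ℓ * 2 ^ ℓ * ∑ i ∈ range (ℓ - 1) with i % 2 = ℓ % 2,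
        (gaussGEta 1 k m₁ (k - i) * gaussGEta η ℓ m₂ (i + 2) +
          -μ * gaussGEta (-1) k m₁ (k - i) * gaussGEta (-η) ℓ m₂ (i + 2)) := by
  rw [sigmaExp_eq_sum_plDomain hμ hkℓ, plDomain, sum_sigma, sum_filter, mul_sum]
  refine sum_congr rfl fun j hj => ?_
  have hjℓ : j + 2 ≤ ℓ := by have := mem_range.1 hj; omega
  rw [sum_sigmaTerm_fiber hμ hkℓ hreg hjℓ]
  split_ifs with hpar
  · have hσ2 : (σ : ℂ) ^ 2 = 1 := by rcases hσ with rfl | rfl <;> norm_num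
    have h2 : (2 : ℂ) ^ (ℓ - 1) * (1 + 1) = 2 ^ ℓ := by
      rw [one_add_one_eq_two, ← pow_succ, Nat.sub_add_cancel (by omega)]
    rw [pow_eq_pow_of_sq_eq_one hσ2 hpar, gaussGEta_congr_pow 1 (i' := k) (by omega),
      gaussGEta_congr_pow (-1) (i' := k) (by omega), gaussGEta_congr_pow η (i' := ℓ) hpar,
      gaussGEta_congr_pow (-η) (i' := ℓ) hpar, Even.neg_one_pow (Nat.even_iff.2 (by omega)), h2]
    ring
  · rw [Odd.neg_one_pow (Nat.odd_iff.2 (by omega))]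
    ring

end

/-- Evaluation of `Σ(2^k, μ2^ℓ; m₁, m₂)` for `k > ℓ ≥ 0`. -/
theorem sigma_two_powers (k ℓ : ℕ) (hkℓ : ℓ < k) (μ : ℤ) (hμ : μ = 1 ∨ μ = -1)
    (m₁ m₂ : ℤ) :
    ((ℓ = 0 ∨ ℓ = 1) → SigmaExp ((2 : ℤ) ^ k) (μ * (2 : ℤ) ^ ℓ) m₁ m₂ = 0) ∧
    (2 ≤ ℓ → 3 ≤ k - ℓ →
      SigmaExp ((2 : ℤ) ^ k) (μ * (2 : ℤ) ^ ℓ) m₁ m₂ =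
        (2 : ℂ) ^ ℓ *
          ∑ i ∈ Finset.filter (fun i => i % 2 = ℓ % 2) (Finset.range (ℓ - 1)),
            (gaussGEta 1 k m₁ (k - i) * gaussGEta 1 ℓ m₂ (i + 2) +
              (-(μ : ℂ)) * gaussGEta (-1) k m₁ (k - i) * gaussGEta (-1) ℓ m₂ (i + 2))) ∧
    (2 ≤ ℓ → k - ℓ = 2 →
      SigmaExp ((2 : ℤ) ^ k) (μ * (2 : ℤ) ^ ℓ) m₁ m₂ =
        (-1 : ℂ) ^ ℓ * (2 : ℂ) ^ ℓ *
          ∑ i ∈ Finset.filter (fun i => i % 2 = ℓ % 2) (Finset.range (ℓ - 1)),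
            (gaussGEta 1 k m₁ (k - i) * gaussGEta 1 ℓ m₂ (i + 2) +
              (-(μ : ℂ)) * gaussGEta (-1) k m₁ (k - i) * gaussGEta (-1) ℓ m₂ (i + 2))) ∧
    (2 ≤ ℓ → k - ℓ = 1 →
      SigmaExp ((2 : ℤ) ^ k) (μ * (2 : ℤ) ^ ℓ) m₁ m₂ =
        (-(μ : ℂ)) ^ ℓ * (2 : ℂ) ^ ℓ *
          ∑ i ∈ Finset.filter (fun i => i % 2 = ℓ % 2) (Finset.range (ℓ - 1)),
            (gaussGEta 1 k m₁ (k - i) * gaussGEta (-1) ℓ m₂ (i + 2) +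
              (-(μ : ℂ)) * gaussGEta (-1) k m₁ (k - i) * gaussGEta 1 ℓ m₂ (i + 2))) := by
  refine ⟨fun hℓ => ?_, fun _ hk => ?_, fun _ hk => ?_, fun _ hk => ?_⟩
  · rw [SigmaExp, plSet_eq_empty (by omega) hkℓ (by rcases hμ with rfl | rfl <;> decide),
      tsum_empty]
  · rw [sigmaExp_eq_of_gaussRegime hμ hkℓ (Or.inl rfl) (gaussRegime_of_three_le hk hμ)]
    simp
  · rw [sigmaExp_eq_of_gaussRegime hμ hkℓ (Or.inr rfl)
      (by rw [hk]; exact gaussRegime_two_pow_two hμ)]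
    push_cast; rfl
  · rw [sigmaExp_eq_of_gaussRegime (σ := -μ) hμ hkℓ (by rcases hμ with rfl | rfl <;> simp)
      (by rw [hk]; exact gaussRegime_two_pow_one hμ), neg_neg]
    push_cast; rfl
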